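/- In a stable model category C, a class of maps S is stable (i.e., the collection of S-local objects is closed under suspension Σ) if and only if the collection of S-equivalences is closed under the loop functor Ω. -/

import Mathlib

open CategoryTheory CategoryTheory.Limits CategoryTheory.MonoidalCategory Opposite

universe w v u u₂ v₂

namespace StableLoc

variable {C : Type u} [Category.{v} C]

/-- The data of a model structure on a category: weak equivalences, cofibrations
and fibrations, each given as a class of morphisms. -/
structure ModelStr (C : Type u) [Category.{v} C] where
  W : MorphismProperty C
  Cof : MorphismProperty C
  Fib : MorphismProperty C

namespace ModelStr

variable {C : Type u} [Category.{v} C]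

def acyclicCof (M : ModelStr C) : MorphismProperty C := fun _ _ f => M.Cof f ∧ M.W f

def acyclicFib (M : ModelStr C) : MorphismProperty C := fun _ _ f => M.Fib f ∧ M.W f

/-- The axioms of a (Quillen) model category for a `ModelStr`. -/
structure IsModel (M : ModelStr C) : Prop where
  id_w : ∀ X : C, M.W (𝟙 X)
  comp_w : ∀ ⦃X Y Z : C⦄ (f : X ⟶ Y) (g : Y ⟶ Z), M.W f → M.W g → M.W (f ≫ g)
  of_postcomp_w : ∀ ⦃X Y Z : C⦄ (f : X ⟶ Y) (g : Y ⟶ Z), M.W g → M.W (f ≫ g) → M.W f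
  of_precomp_w : ∀ ⦃X Y Z : C⦄ (f : X ⟶ Y) (g : Y ⟶ Z), M.W f → M.W (f ≫ g) → M.W g
  lift_cof_acyclicFib : ∀ ⦃A B X Y : C⦄ (i : A ⟶ B) (p : X ⟶ Y), M.Cof i →
    M.acyclicFib p → HasLiftingProperty i p
  lift_acyclicCof_fib : ∀ ⦃A B X Y : C⦄ (i : A ⟶ B) (p : X ⟶ Y), M.acyclicCof i →
    M.Fib p → HasLiftingProperty i p
  fact_cof_acyclicFib : ∀ ⦃X Y : C⦄ (f : X ⟶ Y), ∃ (Z : C) (i : X ⟶ Z) (p : Z ⟶ Y),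
    M.Cof i ∧ M.acyclicFib p ∧ i ≫ p = f
  fact_acyclicCof_fib : ∀ ⦃X Y : C⦄ (f : X ⟶ Y), ∃ (Z : C) (i : X ⟶ Z) (p : Z ⟶ Y),
    M.acyclicCof i ∧ M.Fib p ∧ i ≫ p = f

/-- Right properness: the pullback of a weak equivalence along a fibration is a
weak equivalence. -/
def RightProper (M : ModelStr C) : Prop :=
  ∀ ⦃P X Y Z : C⦄ (fst : P ⟶ X) (snd : P ⟶ Y) (f : X ⟶ Z) (g : Y ⟶ Z),
    IsPullback fst snd f g → M.Fib f → M.W g → M.W fst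

/-- Left properness: the pushout of a weak equivalence along a cofibration is a
weak equivalence. -/
def LeftProper (M : ModelStr C) : Prop :=
  ∀ ⦃Z X Y P : C⦄ (f : Z ⟶ X) (g : Z ⟶ Y) (inl : X ⟶ P) (inr : Y ⟶ P),
    IsPushout f g inl inr → M.Cof f → M.W g → M.W inl

end ModelStr

/-- The class of maps having the right lifting property with respect to all members
of `P`. -/
def RLP (P : MorphismProperty C) : MorphismProperty C :=
  fun _ _ p => ∀ ⦃A B : C⦄ (i : A ⟶ B), P i → HasLiftingProperty i p

/-- The union of two classes of morphisms. -/
def unionMP (P Q : MorphismProperty C) : MorphismProperty C := fun _ _ f => P f ∨ Q f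

/-- `M` is cofibrantly generated by the set `I` of generating cofibrations and the
set `J` of generating acyclic cofibrations. -/
def CofGenBy (M : ModelStr C) (I J : MorphismProperty C) : Prop :=
  M.acyclicFib = RLP I ∧ M.Fib = RLP J

section Pointed

variable [HasZeroObject C] [HasZeroMorphisms C]

open ZeroObject

/-- An object is cofibrant if the map from the point is a cofibration. -/
def Cofibrant (M : ModelStr C) (X : C) : Prop := M.Cof (0 : (0 : C) ⟶ X)

/-- An object is fibrant if the map to the point is a fibration. -/
def Fibrant (M : ModelStr C) (X : C) : Prop := M.Fib (0 : X ⟶ (0 : C))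

/-- `i : F ⟶ X` exhibits `F` as the fibre of `p : X ⟶ B`, i.e. the pullback of
`p` along the map from the point. -/
def IsFibreOf {F X B : C} (i : F ⟶ X) (p : X ⟶ B) : Prop :=
  IsPullback i (0 : F ⟶ (0 : C)) p 0

/-- `c : Y ⟶ Q` exhibits `Q` as the cofibre of `s : X ⟶ Y`, i.e. the pushout of
`s` along the map to the point. -/
def IsCofibreOf {X Y Q : C} (c : Y ⟶ Q) (s : X ⟶ Y) : Prop :=
  IsPushout s (0 : X ⟶ (0 : C)) c 0

end Pointed

section MapSpace

variable (sweq : MorphismProperty SSet) (Map : Cᵒᵖ ⥤ C ⥤ SSet)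

/-- `Z` is `S`-local if `Map(s, Z)` is a weak equivalence of simplicial sets for
every `s ∈ S`. -/
def SLocal (S : MorphismProperty C) (Z : C) : Prop :=
  ∀ ⦃A B : C⦄ (s : A ⟶ B), S s → sweq ((Map.map s.op).app Z)

/-- `f` is an `S`-equivalence if `Map(f, Z)` is a weak equivalence for every
`S`-local `Z`. -/
def SEquiv (S : MorphismProperty C) : MorphismProperty C :=
  fun _ _ f => ∀ Z : C, SLocal sweq Map S Z → sweq ((Map.map f.op).app Z)

/-- `A` is `S`-acyclic if `Map(A, Z)` is contractible for every `S`-local `Z`. -/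
def SAcyclic (S : MorphismProperty C) (A : C) : Prop :=
  ∀ Z : C, SLocal sweq Map S Z → sweq (terminal.from ((Map.obj (op A)).obj Z))

/-- `f` is a `K`-coequivalence if `Map(X, f)` is a weak equivalence for every `X ∈ K`. -/
def KCoequiv (K : Set C) : MorphismProperty C :=
  fun _ _ f => ∀ X ∈ K, sweq ((Map.obj (op X)).map f)

/-- `Z` is `K`-colocal if `Map(Z, f)` is a weak equivalence for every
`K`-coequivalence `f`. -/
def KColocal (K : Set C) (Z : C) : Prop :=
  ∀ ⦃A B : C⦄ (f : A ⟶ B), KCoequiv sweq Map K f → sweq ((Map.obj (op Z)).map f)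

/-- A class of maps `S` is stable if the `S`-local objects are closed under the
suspension functor `Sig`. -/
def StableMaps (Sig : C ⥤ C) (S : MorphismProperty C) : Prop :=
  ∀ Z : C, SLocal sweq Map S Z → SLocal sweq Map S (Sig.obj Z)

/-- A class of objects `K` is stable if the `K`-colocal objects are closed under
the loop functor `Om`. -/
def StableObjects (Om : C ⥤ C) (K : Set C) : Prop :=
  ∀ Z : C, KColocal sweq Map K Z → KColocal sweq Map K (Om.obj Z)

/-- `Map` sends weak equivalences in either variable to weak equivalences of
simplicial sets. -/
def MapRespectsW (M : ModelStr C) : Prop :=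
  (∀ ⦃X Y : C⦄ (f : X ⟶ Y), M.W f → ∀ Z : C, sweq ((Map.map f.op).app Z)) ∧
  (∀ ⦃X Y : C⦄ (f : X ⟶ Y), M.W f → ∀ Z : C, sweq ((Map.obj (op Z)).map f))

/-- The model structure `L` is the left Bousfield localisation of `M` at `S`:
same cofibrations, weak equivalences the `S`-equivalences; every `S`-fibration is
a fibration of `M`. -/
structure IsLeftLocalisation (M L : ModelStr C) (S : MorphismProperty C) : Prop where
  isModel : L.IsModel
  cof_eq : L.Cof = M.Cof
  w_eq : L.W = SEquiv sweq Map S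
  fib_le : ∀ ⦃X Y : C⦄ (f : X ⟶ Y), L.Fib f → M.Fib f

/-- The model structure `R` is the right Bousfield localisation of `M` at `K`:
same fibrations, weak equivalences the `K`-coequivalences; every `K`-cofibration
is a cofibration of `M`. -/
structure IsRightLocalisation (M R : ModelStr C) (K : Set C) : Prop where
  isModel : R.IsModel
  fib_eq : R.Fib = M.Fib
  w_eq : R.W = KCoequiv sweq Map K
  cof_le : ∀ ⦃X Y : C⦄ (f : X ⟶ Y), R.Cof f → M.Cof f

end MapSpace

/-- A model structure is stable (with respect to a suspension-loop adjunction
`adj : Sig ⊣ Om` modelling the derived adjunction) if both functors preserve weak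
equivalences and the unit and counit are weak equivalences, so that `Sig` and `Om`
descend to inverse equivalences of the homotopy category. -/
structure IsStable (M : ModelStr C) (Sig Om : C ⥤ C) (adj : Sig ⊣ Om) : Prop where
  sigma_w : ∀ ⦃X Y : C⦄ (f : X ⟶ Y), M.W f → M.W (Sig.map f)
  omega_w : ∀ ⦃X Y : C⦄ (f : X ⟶ Y), M.W f → M.W (Om.map f)
  unit_w : ∀ X : C, M.W (adj.unit.app X)
  counit_w : ∀ X : C, M.W (adj.counit.app X)

/-- Compatibility of the homotopy function complex with the suspension-loop
adjunction: `Map(ΣX, Y) ≅ Map(X, ΩY)` naturally in both variables. -/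
def MapAdjCompat (Map : Cᵒᵖ ⥤ C ⥤ SSet) (Sig Om : C ⥤ C) : Prop :=
  Nonempty (Sig.op ⋙ Map ≅ Map ⋙ (Functor.whiskeringLeft C C SSet).obj Om)

section Tensor

variable {E : Type u₂} [Category.{v₂} E]

/-- The external pushout-product of `f : A ⟶ B` in `C` with `i : P ⟶ Q` in `E`,
with respect to a tensoring `tens : C ⥤ E ⥤ C` (e.g. coming from framings). -/
noncomputable def extPP [HasPushouts C] (tens : C ⥤ E ⥤ C) {A B : C} (f : A ⟶ B) {P Q : E} (i : P ⟶ Q) :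
    pushout ((tens.obj A).map i) ((tens.map f).app P) ⟶ (tens.obj B).obj Q :=
  pushout.desc ((tens.map f).app Q) ((tens.obj B).map i) ((tens.map f).naturality i)

end Tensor

/-- The set of horns `ΛS` on a set of maps `S`: pushout-products of maps of `S`
with boundary inclusions `∂Δ[n] ⟶ Δ[n]`, via the tensoring with simplicial sets
obtained from framings. -/
def LambdaS [HasPushouts C] (tens : C ⥤ SSet ⥤ C) (S : MorphismProperty C) :
    MorphismProperty C :=
  fun _ _ g => ∃ (n : ℕ) (A B : C) (f : A ⟶ B), S f ∧
    Nonempty (Arrow.mk g ≅ Arrow.mk (extPP tens f (SSet.boundary n).ι))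

/-- The set of horns `ΛK` on a set of objects `K`: the maps
`X ⊗ ∂Δ[n] ⟶ X ⊗ Δ[n]` for `X ∈ K`. -/
def LambdaK (tens : C ⥤ SSet ⥤ C) (K : Set C) : MorphismProperty C :=
  fun _ _ g => ∃ (n : ℕ) (X : C), X ∈ K ∧
    Nonempty (Arrow.mk g ≅ Arrow.mk ((tens.obj X).map (SSet.boundary n).ι))

section Monoidal

variable [MonoidalCategory C] [HasPushouts C]

/-- The pushout-product of two maps in a monoidal category with pushouts. -/
noncomputable def pushoutProduct {A B X Y : C} (f : A ⟶ B) (g : X ⟶ Y) :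
    pushout (A ◁ g) (f ▷ X) ⟶ B ⊗ Y :=
  pushout.desc (f ▷ Y) (B ◁ g) (whisker_exchange f g)

/-- The class `S □ T` of pushout-products of maps of `S` with maps of `T`. -/
def SqProd (S T : MorphismProperty C) : MorphismProperty C :=
  fun _ _ h => ∃ (A B X Y : C) (s : A ⟶ B) (t : X ⟶ Y), S s ∧ T t ∧
    Nonempty (Arrow.mk h ≅ Arrow.mk (pushoutProduct s t))

/-- The pushout-product axiom for a model structure on a monoidal category. -/
def PushoutProductAxiom (M : ModelStr C) : Prop :=
  ∀ ⦃A B X Y : C⦄ (f : A ⟶ B) (g : X ⟶ Y), M.Cof f → M.Cof g →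
    M.Cof (pushoutProduct f g) ∧ (M.W f → M.W (pushoutProduct f g)) ∧
      (M.W g → M.W (pushoutProduct f g))

/-- The unit axiom for a monoidal model category. -/
def UnitAxiom [HasZeroObject C] [HasZeroMorphisms C] (M : ModelStr C) : Prop :=
  ∀ (QU : C) (q : QU ⟶ 𝟙_ C), Cofibrant M QU → M.W q →
    ∀ X : C, Cofibrant M X → M.W (q ▷ X) ∧ M.W (X ◁ q)

/-- A monoidal model category: the pushout-product axiom and the unit axiom hold. -/
def MonoidalModel [HasZeroObject C] [HasZeroMorphisms C] (M : ModelStr C) : Prop :=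
  PushoutProductAxiom M ∧ UnitAxiom M

/-- The class of maps `j ▷ Z` for `j ∈ P` and `Z` any object. -/
def tensorWithObjects (P : MorphismProperty C) : MorphismProperty C :=
  fun _ _ g => ∃ (A B : C) (j : A ⟶ B) (Z : C), P j ∧
    Nonempty (Arrow.mk g ≅ Arrow.mk (j ▷ Z))

end Monoidal

/-- The closure of a class of maps under pushouts and transfinite compositions
(the latter encoded as colimits of chains all of whose maps lie in the closure). -/
inductive PushTransClosure (P : MorphismProperty C) : ∀ ⦃X Y : C⦄, (X ⟶ Y) → Prop
  | base : ∀ ⦃X Y : C⦄ (f : X ⟶ Y), P f → PushTransClosure P f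
  | pushout : ∀ ⦃Z X Y Q : C⦄ (f : Z ⟶ X) (g : Z ⟶ Y) (inl : X ⟶ Q) (inr : Y ⟶ Q),
      IsPushout f g inl inr → PushTransClosure P f → PushTransClosure P inr
  | trans : ∀ (J : Type w) [LinearOrder J] [OrderBot J] (F : J ⥤ C) (c : Cocone F),
      IsColimit c → (∀ (j j' : J) (h : j ≤ j'), PushTransClosure P (F.map (homOfLE h))) →
      PushTransClosure P (c.ι.app ⊥)

/-- The monoid axiom: every map obtained from maps `j ⊗ Z` (`j` an acyclic
cofibration, `Z` any object) by pushouts and transfinite compositions is a weak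
equivalence. -/
def MonoidAxiom [MonoidalCategory C] [HasPushouts C] (M : ModelStr C) : Prop :=
  ∀ ⦃X Y : C⦄ (f : X ⟶ Y), PushTransClosure.{w} (tensorWithObjects M.acyclicCof) f → M.W f

section Quillen

variable {D : Type u₂} [Category.{v₂} D]

/-- A Quillen pair: the left adjoint preserves cofibrations and acyclic
cofibrations. -/
structure QuillenPair (MD : ModelStr D) (MC : ModelStr C) (F : D ⥤ C) : Prop where
  preserves_cof : ∀ ⦃X Y : D⦄ (f : X ⟶ Y), MD.Cof f → MC.Cof (F.map f)
  preserves_acyclicCof : ∀ ⦃X Y : D⦄ (f : X ⟶ Y), MD.acyclicCof f → MC.acyclicCof (F.map f)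

/-- A Quillen equivalence: a Quillen pair such that for cofibrant `X` and fibrant
`Y`, a map `F X ⟶ Y` is a weak equivalence iff its adjoint `X ⟶ G Y` is. -/
structure QuillenEquivalencePair [HasZeroObject C] [HasZeroMorphisms C]
    [HasZeroObject D] [HasZeroMorphisms D]
    (MD : ModelStr D) (MC : ModelStr C) (F : D ⥤ C) (G : C ⥤ D) (adj : F ⊣ G)
    extends QuillenPair MD MC F : Prop where
  derived_equiv : ∀ (X : D) (Y : C), Cofibrant MD X → Fibrant MC Y →
    ∀ (f : F.obj X ⟶ Y), MC.W f ↔ MD.W ((adj.homEquiv X Y) f)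

end Quillen

/-- An object `X` is homotopically compact if, for every coproduct, the canonical
map `⊕ₐ [X, Yₐ] → [X, ∐ₐ Yₐ]` is bijective, where `hoHom` models the graded
homotopy classes of maps `[-,-]` in the homotopy category. -/
def HomCompact (hoHom : Cᵒᵖ ⥤ C ⥤ AddCommGrpCat.{v}) (X : C) : Prop :=
  ∀ ⦃J : Type v⦄ [DecidableEq J] (f : J → C) (cf : Cofan f), IsColimit cf →
    Function.Bijective (DirectSum.toAddMonoid
      (fun j => (((hoHom.obj (op X)).map (cf.inj j)).hom :
        (hoHom.obj (op X)).obj (f j) →+ (hoHom.obj (op X)).obj cf.pt)))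

/-- The smallest localising class of objects containing `K`: closed under weak
equivalences, (de)suspension, cofibre sequences and coproducts. -/
inductive LocClos (M : ModelStr C) (Sig Om : C ⥤ C) (K : Set C) : C → Prop
  | of : ∀ X ∈ K, LocClos M Sig Om K X
  | weq_src : ∀ ⦃X Y : C⦄ (wm : X ⟶ Y), M.W wm → LocClos M Sig Om K Y → LocClos M Sig Om K X
  | weq_tgt : ∀ ⦃X Y : C⦄ (wm : X ⟶ Y), M.W wm → LocClos M Sig Om K X → LocClos M Sig Om K Y
  | shift : ∀ ⦃X : C⦄, LocClos M Sig Om K X → LocClos M Sig Om K (Sig.obj X)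
  | unshift : ∀ ⦃X : C⦄, LocClos M Sig Om K X → LocClos M Sig Om K (Om.obj X)
  | cofibre : ∀ ⦃X Y Z Q : C⦄ (f : X ⟶ Y) (z : X ⟶ Z) (c : Y ⟶ Q) (z' : Z ⟶ Q),
      IsZero Z → IsPushout f z c z' → LocClos M Sig Om K X → LocClos M Sig Om K Y →
      LocClos M Sig Om K Q
  | coprod : ∀ ⦃J : Type w⦄ (f : J → C) (cf : Cofan f), IsColimit cf →
      (∀ j : J, LocClos M Sig Om K (f j)) → LocClos M Sig Om K cf.pt

/-! Since `Σ ⊣ Ω` is an equivalence compatible with `Map`,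
`Map(Ω f, Z) ≃ Map(Ω f, Ω Σ Z) ≅ Map(Σ Ω f, Σ Z) ≃ Map(f, Σ Z)`. Hence if `Σ` preserves
`S`-local objects, `Ω` preserves `S`-equivalences; conversely, applied to `s ∈ S` (itself an
`S`-equivalence), it shows that `Map(s, Σ Z)` is a weak equivalence for `S`-local `Z`. -/

section MapIff

variable {T : Type u₂} [Category.{v₂} T] (P : MorphismProperty T) [P.RespectsIso]
  (Map : Cᵒᵖ ⥤ C ⥤ T)

lemma map_app_iff_of_iso {A B : C} (g : A ⟶ B) {Z Z' : C} (i : Z ≅ Z') :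
    P ((Map.map g.op).app Z) ↔ P ((Map.map g.op).app Z') :=
  P.arrow_mk_iso_iff (Arrow.isoMk ((Map.obj (op B)).mapIso i) ((Map.obj (op A)).mapIso i)
    ((Map.map g.op).naturality i.hom))

lemma map_app_iff_of_arrowIso {A B A' B' : C} {f : A ⟶ B} {f' : A' ⟶ B'}
    (e : Arrow.mk f ≅ Arrow.mk f') (Z : C) :
    P ((Map.map f.op).app Z) ↔ P ((Map.map f'.op).app Z) :=
  (P.inverseImage (Map ⋙ (evaluation C T).obj Z)).unop.arrow_mk_iso_iff e

variable {Sig Om : C ⥤ C}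

lemma map_susp_app_iff (e : Sig.op ⋙ Map ≅ Map ⋙ (Functor.whiskeringLeft C C T).obj Om)
    {A B : C} (g : A ⟶ B) (Z : C) :
    P ((Map.map (Sig.map g).op).app Z) ↔ P ((Map.map g.op).app (Om.obj Z)) :=
  P.arrow_mk_iso_iff (Arrow.isoMk ((e.app (op B)).app Z) ((e.app (op A)).app Z)
    (NatTrans.congr_app (e.hom.naturality g.op) Z).symm)

lemma map_loop_app_iff (e : Sig.op ⋙ Map ≅ Map ⋙ (Functor.whiskeringLeft C C T).obj Om)
    (adj : Sig ⊣ Om) [Sig.IsEquivalence] ⦃X Y : C⦄ (f : X ⟶ Y) (Z : C) :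
    P ((Map.map (Om.map f).op).app Z) ↔ P ((Map.map f.op).app (Sig.obj Z)) := by
  have : Om.IsEquivalence := adj.isEquivalence_right_of_isEquivalence_left
  calc P ((Map.map (Om.map f).op).app Z)
      ↔ P ((Map.map (Om.map f).op).app (Om.obj (Sig.obj Z))) :=
        map_app_iff_of_iso P Map _ (asIso (adj.unit.app Z))
    _ ↔ P ((Map.map (Sig.map (Om.map f)).op).app (Sig.obj Z)) :=
        (map_susp_app_iff P Map e _ _).symm
    _ ↔ P ((Map.map f.op).app (Sig.obj Z)) :=
        map_app_iff_of_arrowIso P Map (Arrow.isoMk (asIso (adj.counit.app X))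
          (asIso (adj.counit.app Y)) (adj.counit.naturality f).symm) _

end MapIff

lemma sEquiv_of_mem {sweq : MorphismProperty SSet} {Map : Cᵒᵖ ⥤ C ⥤ SSet}
    {S : MorphismProperty C} {A B : C} {s : A ⟶ B} (hs : S s) : SEquiv sweq Map S s :=
  fun _ hZ => hZ s hs

theorem statement0_general {C : Type u} [Category.{v} C]
    (sweq : MorphismProperty SSet) (Map : Cᵒᵖ ⥤ C ⥤ SSet)
    (Sig Om : C ⥤ C) (adj : Sig ⊣ Om)
    [Sig.IsEquivalence]
    (hcompat : MapAdjCompat Map Sig Om)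
    (hiso : sweq.RespectsIso)
    (S : MorphismProperty C) :
    StableMaps sweq Map Sig S ↔
      (∀ ⦃X Y : C⦄ (f : X ⟶ Y), SEquiv sweq Map S f → SEquiv sweq Map S (Om.map f)) := by
  obtain ⟨e⟩ := hcompat
  have loop_iff := map_loop_app_iff sweq Map e adj
  constructor
  · intro hstable X Y f hf Z hZ
    exact (loop_iff f Z).2 (hf _ (hstable Z hZ))
  · intro hloop Z hZ A B s hs
    exact (loop_iff s Z).1 (hloop s (sEquiv_of_mem hs) Z hZ)

/-- in a stable model category, a class of maps `S` is stable (the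
`S`-local objects are closed under suspension) iff the `S`-equivalences are
closed under the loop functor. -/
theorem statement0 {C : Type u} [Category.{v} C]
    (M : ModelStr C) (hM : M.IsModel)
    (sweq : MorphismProperty SSet) (Map : Cᵒᵖ ⥤ C ⥤ SSet)
    (Sig Om : C ⥤ C) (adj : Sig ⊣ Om)
    [Sig.IsEquivalence]
    (hstable : IsStable M Sig Om adj)
    (hcompat : MapAdjCompat Map Sig Om)
    (hiso : sweq.RespectsIso) (hW : MapRespectsW sweq Map M)
    (S : MorphismProperty C) :
    StableMaps sweq Map Sig S ↔
      (∀ ⦃X Y : C⦄ (f : X ⟶ Y), SEquiv sweq Map S f → SEquiv sweq Map S (Om.map f)) :=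
  statement0_general sweq Map Sig Om adj hcompat hiso S

end StableLoc
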